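/- arXiv:1701.08537 — 5 statements merged into one kernel-verified Lean document; each statement's English description precedes it below -/
import Mathlib

section
/- Let V be an n-dimensional vector space over the field F_2 of 2 elements with fixed basis {b_1,...,b_n}. If v ∈ T_s for some 1 ≤ s ≤ n, then the degree of v in Γ(V) equals (2^s − 1)·2^{n−s} − 1. -/
/-- The non-zero component graph of a vector space `W` with respect to a fixed
basis `b`: vertices are the non-zero vectors, and two distinct vertices are
adjacent iff some basis vector has non-zero coefficient in both of their
representations. -/
def nzcGraph {F W : Type*} [Field F] [AddCommGroup W] [Module F W] {n : ℕ}
    (b : Module.Basis (Fin n) F W) : SimpleGraph {w : W // w ≠ 0} where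
  Adj u v := u ≠ v ∧ ∃ i, b.repr u.1 i ≠ 0 ∧ b.repr v.1 i ≠ 0
  symm := by
    constructor
    rintro u v ⟨h, i, hu, hv⟩
    exact ⟨h.symm, i, hv, hu⟩
  loopless := by
    constructor
    rintro u ⟨h, -⟩
    exact h rfl

/-- `Tset b i` is the class `Tᵢ` of non-zero vectors having exactly `i`
non-zero coefficients in their representation w.r.t. the basis `b`. -/
def Tset {F W : Type*} [Field F] [AddCommGroup W] [Module F W] {n : ℕ}
    (b : Module.Basis (Fin n) F W) (i : ℕ) : Set {w : W // w ≠ 0} :=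
  {v | (b.repr v.1).support.card = i}

/-- If `v ∈ T_s`, then the degree of `v` in `Γ(V)` (over `F₂`) equals
`(2^s - 1) * 2^(n-s) - 1`. -/
theorem stmt_3 {F W : Type*} [Field F] [Fintype F] (hq : Fintype.card F = 2)
    [AddCommGroup W] [Module F W] {n : ℕ} (b : Module.Basis (Fin n) F W)
    (s : ℕ) (hs1 : 1 ≤ s) (hsn : s ≤ n) (v : {w : W // w ≠ 0}) (hv : v ∈ Tset b s) :
    ((nzcGraph b).neighborSet v).ncard = (2 ^ s - 1) * 2 ^ (n - s) - 1 := by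
  classical
  set e := b.equivFun with he
  set c : Fin n → F := e v.1 with hc
  have hrepr : ∀ (w : W) (i : Fin n), b.repr w i = e w i := by
    intro w i; simp [he, Module.Basis.equivFun_apply]
  set S : Finset (Fin n) := (b.repr v.1).support with hS
  have hScard : S.card = s := hv
  have hSmem : ∀ i, i ∈ S ↔ c i ≠ 0 := by
    intro i
    rw [hS, Finsupp.mem_support_iff, hrepr]
  set T : Finset (Fin n → F) :=
    Finset.univ.filter (fun f => f ≠ c ∧ ∃ i, f i ≠ 0 ∧ c i ≠ 0) with hT
  have hinj : Function.Injective (fun u : {w : W // w ≠ 0} => e u.1) := by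
    intro a b h
    exact Subtype.ext (e.injective h)
  have himg : (fun u : {w : W // w ≠ 0} => e u.1) '' ((nzcGraph b).neighborSet v)
      = ↑T := by
    ext f
    simp only [Set.mem_image, SimpleGraph.mem_neighborSet, hT, Finset.coe_filter,
      Set.mem_setOf_eq, Finset.mem_univ, true_and]
    constructor
    · rintro ⟨u, ⟨hne, i, hvi, hui⟩, rfl⟩
      refine ⟨?_, i, ?_, ?_⟩
      · intro h
        exact hne (Subtype.ext (e.injective h)).symm
      · rwa [← hrepr]
      · rw [hc, ← hrepr]; exact hvi
    · rintro ⟨hfc, i, hfi, hci⟩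
      have hw : e.symm f ≠ 0 := by
        intro h
        apply hfi
        have : f = e (0 : W) := by rw [← h]; simp
        rw [this]; simp
      refine ⟨⟨e.symm f, hw⟩, ⟨?_, i, ?_, ?_⟩, by simp⟩
      · intro h
        apply hfc
        have := congrArg (fun u : {w : W // w ≠ 0} => e u.1) h
        simpa using this.symm
      · rw [hrepr]; exact hci
      · rw [hrepr]; simp [hfi]
  have h1 : ((nzcGraph b).neighborSet v).ncard = T.card := by
    rw [← Set.ncard_coe_finset, ← himg, Set.ncard_image_of_injective _ hinj]
  -- count T
  set A : Finset (Fin n → F) :=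
    Finset.univ.filter (fun f => ∃ i, f i ≠ 0 ∧ c i ≠ 0) with hA
  have hTA : T = A.erase c := by
    ext f
    simp only [hT, hA, Finset.mem_erase, Finset.mem_filter, Finset.mem_univ, true_and]
  have hcne : ∃ i, c i ≠ 0 ∧ c i ≠ 0 := by
    obtain ⟨i, hi⟩ : S.Nonempty := Finset.card_pos.mp (by omega)
    exact ⟨i, (hSmem i).mp hi, (hSmem i).mp hi⟩
  have hcA : c ∈ A := by
    simp only [hA, Finset.mem_filter, Finset.mem_univ, true_and]
    exact hcne
  have hTcard : T.card = A.card - 1 := by rw [hTA, Finset.card_erase_of_mem hcA]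
  -- count B, the complement of A
  set B : Finset (Fin n → F) :=
    Finset.univ.filter (fun f => ∀ i, c i ≠ 0 → f i = 0) with hB
  have hABeq : (Finset.univ.filter fun f => ¬ ∃ i, f i ≠ 0 ∧ c i ≠ 0) = B := by
    ext f
    simp only [hB, Finset.mem_filter, Finset.mem_univ, true_and]
    push_neg
    constructor
    · intro h i hci
      by_contra hfi
      exact hci (h i hfi)
    · intro h i hfi
      by_contra hci
      exact hfi (h i hci)
  have hAB : A.card + B.card = 2 ^ n := by
    have h := Finset.card_filter_add_card_filter_not
      (s := (Finset.univ : Finset (Fin n → F)))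
      (p := fun f => ∃ i, f i ≠ 0 ∧ c i ≠ 0)
    rw [Finset.card_univ, Fintype.card_fun, hq, Fintype.card_fin] at h
    rw [hA, ← hABeq]
    exact h
  have hBcard : B.card = 2 ^ (n - s) := by
    have hBeq : B = Fintype.piFinset (fun i => if c i ≠ 0 then ({0} : Finset F)
        else Finset.univ) := by
      ext f
      simp only [hB, Finset.mem_filter, Finset.mem_univ, true_and,
        Fintype.mem_piFinset]
      refine forall_congr' fun i => ?_
      by_cases h : c i ≠ 0 <;> simp [h]
    rw [hBeq, Fintype.card_piFinset]
    have : ∀ i : Fin n, (if c i ≠ 0 then ({0} : Finset F) else Finset.univ).card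
        = if i ∈ S then 1 else 2 := by
      intro i
      by_cases h : i ∈ S
      · simp [h, (hSmem i).mp h]
      · have : ¬ c i ≠ 0 := fun hc' => h ((hSmem i).mpr hc')
        simp [h, this, Finset.card_univ, hq]
    simp only [this]
    rw [Finset.prod_ite]
    simp only [Finset.prod_const_one, Finset.prod_const, one_mul]
    congr 1
    have : Finset.univ.filter (fun i => ¬ i ∈ S) = Sᶜ := by
      ext i; simp
    rw [this, Finset.card_compl, Fintype.card_fin, hScard]
  have hpow : 2 ^ (n - s) ≤ 2 ^ n := Nat.pow_le_pow_right (by norm_num) (Nat.sub_le n s)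
  have hfactor : (2 ^ s - 1) * 2 ^ (n - s) = 2 ^ n - 2 ^ (n - s) := by
    rw [Nat.sub_mul, one_mul, ← pow_add, Nat.add_sub_cancel' hsn]
  rw [h1, hTcard, hfactor]
  omega
end

section
/- Let V be an n-dimensional vector space over the field F_2 of 2 elements with n ≥ 3 and fixed basis {b_1,...,b_n}. Then every locating-dominating set L_D of Γ(V) satisfies |L_D| ≥ n. -/
/-- A set `L` is a locating-dominating set of `G` if for every two distinct
vertices `u, v ∉ L` we have `∅ ≠ N(u) ∩ L ≠ N(v) ∩ L ≠ ∅`. -/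
def IsLocDom {α : Type*} (G : SimpleGraph α) (L : Set α) : Prop :=
  ∀ ⦃u v : α⦄, u ∉ L → v ∉ L → u ≠ v →
    G.neighborSet u ∩ L ≠ ∅ ∧
    G.neighborSet u ∩ L ≠ G.neighborSet v ∩ L ∧
    G.neighborSet v ∩ L ≠ ∅

/-- A set `C` is an identifying code of `G` if `N[u] ∩ C ≠ N[v] ∩ C`
for all distinct vertices `u, v`. -/
def IsIdCode {α : Type*} (G : SimpleGraph α) (C : Set α) : Prop :=
  ∀ ⦃u v : α⦄, u ≠ v →
    insert u (G.neighborSet u) ∩ C ≠ insert v (G.neighborSet v) ∩ C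

/-- The location-domination number: minimum cardinality of a locating-dominating set. -/
noncomputable def locDomNum {α : Type*} (G : SimpleGraph α) : ℕ :=
  sInf {k : ℕ | ∃ L : Set α, IsLocDom G L ∧ L.ncard = k}

/-- The identifying number: minimum cardinality of an identifying code. -/
noncomputable def idNum {α : Type*} (G : SimpleGraph α) : ℕ :=
  sInf {k : ℕ | ∃ C : Set α, IsIdCode G C ∧ C.ncard = k}
/-- For `n ≥ 3` over `F₂`: every locating-dominating set of `Γ(V)` has at least `n` elements. -/
theorem stmt_8 {F W : Type*} [Field F] [Fintype F] (hq : Fintype.card F = 2)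
    [AddCommGroup W] [Module F W] {n : ℕ} (hn : 3 ≤ n) (b : Module.Basis (Fin n) F W)
    (L : Set {w : W // w ≠ 0}) (hL : IsLocDom (nzcGraph b) L) :
    n ≤ L.ncard := by
  classical
  haveI : Fintype W := Fintype.ofEquiv _ b.equivFun.toEquiv.symm
  have hcardW : Fintype.card W = 2 ^ n := by
    rw [Fintype.card_congr b.equivFun.toEquiv, Fintype.card_fun, hq, Fintype.card_fin]
  have hcarda : Fintype.card {w : W // w ≠ 0} = 2 ^ n - 1 := by
    have := Fintype.card_subtype_compl (α := W) (fun w => w = 0)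
    simp only [ne_eq]
    rw [this, Fintype.card_subtype_eq, hcardW]
  have hLfin : L.Finite := Set.toFinite L
  set Lf := hLfin.toFinset with hLfdef
  have hm : L.ncard = Lf.card := Set.ncard_eq_toFinset_card L hLfin
  by_contra hlt
  push_neg at hlt
  have hmn : Lf.card < n := by rwa [hm] at hlt
  have h2 : 2 * 2 ^ (n - 1) = 2 ^ n := by
    rw [← pow_succ']
    congr 1
    omega
  have h3 : n - 1 < 2 ^ (n - 1) := Nat.lt_two_pow_self
  have h1 : Lf.card + Lfᶜ.card = 2 ^ n - 1 := by
    rw [Finset.card_add_card_compl, hcarda]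
  rcases le_or_gt Lfᶜ.card 1 with hA | hB
  · omega
  · set G := nzcGraph b with hG
    set f : {w : W // w ≠ 0} → Finset {w : W // w ≠ 0} :=
      fun u => Lf.filter (fun x => G.Adj u x) with hf
    have hfcoe : ∀ u, (f u : Set {w : W // w ≠ 0}) = G.neighborSet u ∩ L := by
      intro u
      ext x
      simp only [hf, Finset.coe_filter, Set.mem_setOf_eq, hLfdef,
        Set.Finite.mem_toFinset, Set.mem_inter_iff, SimpleGraph.mem_neighborSet]
      tauto
    have hmaps : ∀ u ∈ Lfᶜ, f u ∈ Lf.powerset.erase ∅ := by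
      intro u hu
      rw [Finset.mem_erase, Finset.mem_powerset]
      obtain ⟨v, hv, hvu⟩ := Finset.exists_mem_ne hB u
      have hu' : u ∉ L := by simpa [hLfdef] using Finset.mem_compl.mp hu
      have hv' : v ∉ L := by simpa [hLfdef] using Finset.mem_compl.mp hv
      refine ⟨?_, Finset.filter_subset _ _⟩
      intro h0
      apply (hL hu' hv' hvu.symm).1
      rw [← hfcoe u, h0]
      simp
    have hinj : Set.InjOn f ↑Lfᶜ := by
      intro u hu v hv hfe
      by_contra huv
      have hu' : u ∉ L := fun h =>
        Finset.mem_compl.mp (by simpa using hu) (by simpa [hLfdef] using h)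
      have hv' : v ∉ L := fun h =>
        Finset.mem_compl.mp (by simpa using hv) (by simpa [hLfdef] using h)
      apply (hL hu' hv' huv).2.1
      rw [← hfcoe u, ← hfcoe v, hfe]
    have hcount := Finset.card_le_card_of_injOn f hmaps hinj
    have ht : (Lf.powerset.erase ∅).card = 2 ^ Lf.card - 1 := by
      rw [Finset.card_erase_of_mem (Finset.mem_powerset.mpr (Finset.empty_subset _)),
        Finset.card_powerset]
    have h4 : 2 ^ Lf.card ≤ 2 ^ (n - 1) := Nat.pow_le_pow_right (by norm_num) (by omega)
    omega
end

section
/- Let V be an n-dimensional vector space over the field F_2 of 2 elements with n ≥ 3. Then the location-domination number of Γ(V) equals n. -/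
/-!
Over `F₂` a vector is determined by its support, and a vertex outside the basis is adjacent to
exactly the basis vectors in its support; hence the `n` basis vectors form a locating-dominating
set. Conversely, the vertices outside a locating-dominating set `L` have pairwise distinct traces
on `L`, so `2ⁿ - 1 ≤ |L| + 2^|L|`, which forces `|L| ≥ n` as soon as `n ≥ 3`.
-/

section LocatingDominating

variable {α : Type*} (G : SimpleGraph α)

lemma isLocDom_univ : IsLocDom G Set.univ :=
  fun u _ hu => absurd (Set.mem_univ u) hu

lemma locDomNum_le {L : Set α} (hL : IsLocDom G L) : locDomNum G ≤ L.ncard :=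
  Nat.sInf_le ⟨L, hL, rfl⟩

lemma le_locDomNum {k : ℕ} (h : ∀ L, IsLocDom G L → k ≤ L.ncard) : k ≤ locDomNum G :=
  le_csInf ⟨_, Set.univ, isLocDom_univ G, rfl⟩ (by rintro _ ⟨L, hL, rfl⟩; exact h L hL)

lemma IsLocDom.ncard_compl_le [Finite α] {L : Set α} (hL : IsLocDom G L) :
    Lᶜ.ncard ≤ 2 ^ L.ncard := by
  rw [← Set.ncard_powerset L]
  refine Set.ncard_le_ncard_of_injOn (fun u => G.neighborSet u ∩ L)
    (fun _ _ => Set.inter_subset_right) ?_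
  intro u hu v hv huv
  by_contra hne
  exact (hL hu hv hne).2.1 huv

lemma IsLocDom.natCard_le [Finite α] {L : Set α} (hL : IsLocDom G L) :
    Nat.card α ≤ L.ncard + 2 ^ L.ncard := by
  rw [← Set.ncard_add_ncard_compl L]
  exact Nat.add_le_add_left (hL.ncard_compl_le G) _

end LocatingDominating

lemma eq_one_of_ne_zero_of_card_eq_two {F : Type*} [Field F] [Fintype F]
    (hq : Fintype.card F = 2) {x : F} (hx : x ≠ 0) : x = 1 := by
  classical
  have : Subsingleton Fˣ :=
    Fintype.card_le_one_iff_subsingleton.1 (by rw [Fintype.card_units, hq])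
  simpa using congrArg Units.val (Subsingleton.elim (Units.mk0 x hx) 1)

lemma Finsupp.eq_of_support_eq_of_card_eq_two {ι F : Type*} [Field F] [Fintype F]
    (hq : Fintype.card F = 2) {f g : ι →₀ F} (h : f.support = g.support) : f = g := by
  ext i
  by_cases hf : f i = 0
  · rwa [hf, eq_comm, ← Finsupp.notMem_support_iff, ← h, Finsupp.notMem_support_iff]
  · have hg : g i ≠ 0 := by rwa [← Finsupp.mem_support_iff, ← h, Finsupp.mem_support_iff]
    rw [eq_one_of_ne_zero_of_card_eq_two hq hf, eq_one_of_ne_zero_of_card_eq_two hq hg]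

lemma lt_two_pow_pred {n : ℕ} (hn : 3 ≤ n) : n < 2 ^ (n - 1) := by
  induction n, hn using Nat.le_induction with
  | base => norm_num
  | succ m hm ih =>
    rw [Nat.add_sub_cancel, ← Nat.sub_add_cancel (by omega : 1 ≤ m), pow_succ]
    omega

lemma add_two_pow_lt_two_pow_sub_one {k n : ℕ} (hn : 3 ≤ n) (hk : k < n) :
    k + 2 ^ k < 2 ^ n - 1 := by
  have hpow : 2 ^ k ≤ 2 ^ (n - 1) := Nat.pow_le_pow_right two_pos (by omega)
  have hsplit : 2 ^ n = 2 * 2 ^ (n - 1) := by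
    rw [← pow_succ', Nat.sub_add_cancel (by omega)]
  have := lt_two_pow_pred hn
  omega

lemma Module.Basis.natCard_subtype_ne_zero {F W : Type*} [Field F] [Finite F] [AddCommGroup W]
    [Module F W] {n : ℕ} (b : Module.Basis (Fin n) F W) :
    Nat.card {w : W // w ≠ 0} = Nat.card F ^ n - 1 := by
  classical
  have : Module.Finite F W := Module.Finite.of_basis b
  have : Finite W := Module.finite_of_finite F
  have := Fintype.ofFinite W
  rw [Nat.card_eq_fintype_card, Fintype.card_subtype_compl, Fintype.card_subtype_eq,
    ← Nat.card_eq_fintype_card, Module.natCard_eq_pow_finrank (K := F),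
    Module.finrank_eq_card_basis b, Fintype.card_fin]

section NonZeroComponentGraph

variable {F W : Type*} [Field F] [AddCommGroup W] [Module F W] {n : ℕ}
  (b : Module.Basis (Fin n) F W)

noncomputable def basisVertex (i : Fin n) : {w : W // w ≠ 0} := ⟨b i, b.ne_zero i⟩

lemma basisVertex_injective : Function.Injective (basisVertex b) :=
  fun _ _ h => b.injective (congrArg Subtype.val h)

lemma ncard_range_basisVertex : (Set.range (basisVertex b)).ncard = n := by
  rw [← Set.image_univ, Set.ncard_image_of_injective _ (basisVertex_injective b),
    Set.ncard_univ, Nat.card_fin]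

lemma nzcGraph_adj_basisVertex {u : {w : W // w ≠ 0}} {i : Fin n} (hu : u ≠ basisVertex b i) :
    (nzcGraph b).Adj u (basisVertex b i) ↔ b.repr u.1 i ≠ 0 := by
  constructor
  · rintro ⟨-, j, hj, hji⟩
    obtain rfl : j = i := by
      by_contra hne
      simp [basisVertex, Ne.symm hne] at hji
    exact hj
  · exact fun h => ⟨hu, i, h, by simp [basisVertex]⟩

lemma neighborSet_inter_range_basisVertex {u : {w : W // w ≠ 0}}
    (hu : u ∉ Set.range (basisVertex b)) :
    (nzcGraph b).neighborSet u ∩ Set.range (basisVertex b) =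
      basisVertex b '' ↑(b.repr u.1).support := by
  ext v
  simp only [Set.mem_inter_iff, SimpleGraph.mem_neighborSet, Set.mem_range, Set.mem_image,
    Finset.mem_coe, Finsupp.mem_support_iff]
  constructor
  · rintro ⟨hadj, i, rfl⟩
    exact ⟨i, (nzcGraph_adj_basisVertex b fun h => hu ⟨i, h.symm⟩).1 hadj, rfl⟩
  · rintro ⟨i, hi, rfl⟩
    exact ⟨(nzcGraph_adj_basisVertex b fun h => hu ⟨i, h.symm⟩).2 hi, i, rfl⟩

lemma isLocDom_range_basisVertex [Fintype F] (hq : Fintype.card F = 2) :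
    IsLocDom (nzcGraph b) (Set.range (basisVertex b)) := by
  have hne : ∀ u ∉ Set.range (basisVertex b),
      (nzcGraph b).neighborSet u ∩ Set.range (basisVertex b) ≠ ∅ := by
    intro u hu
    rw [neighborSet_inter_range_basisVertex b hu, ← Set.nonempty_iff_ne_empty,
      Set.image_nonempty, Finset.coe_nonempty, Finsupp.support_nonempty_iff]
    simpa using u.2
  intro u v hu hv huv
  refine ⟨hne u hu, fun h => huv ?_, hne v hv⟩
  rw [neighborSet_inter_range_basisVertex b hu, neighborSet_inter_range_basisVertex b hv,
    (basisVertex_injective b).image_injective.eq_iff, Finset.coe_inj] at h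
  exact Subtype.ext (b.repr.injective (Finsupp.eq_of_support_eq_of_card_eq_two hq h))

end NonZeroComponentGraph

/-- For `n ≥ 3` over `F₂`, the location-domination number of `Γ(V)` equals `n`. -/
theorem stmt_11 {F W : Type*} [Field F] [Fintype F] (hq : Fintype.card F = 2)
    [AddCommGroup W] [Module F W] {n : ℕ} (hn : 3 ≤ n) (b : Module.Basis (Fin n) F W) :
    locDomNum (nzcGraph b) = n := by
  have hbasis := isLocDom_range_basisVertex b hq
  refine le_antisymm ((locDomNum_le _ hbasis).trans_eq (ncard_range_basisVertex b)) ?_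
  have : Module.Finite F W := Module.Finite.of_basis b
  have : Finite W := Module.finite_of_finite F
  refine le_locDomNum _ fun L hL => ?_
  by_contra! hk
  have hcard := hL.natCard_le
  rw [b.natCard_subtype_ne_zero, Nat.card_eq_fintype_card, hq] at hcard
  exact hcard.not_gt (add_two_pow_lt_two_pow_sub_one hn hk)
end

section
/- Let V be an n-dimensional vector space over the field F_2 of 2 elements with n ≥ 3 and fixed basis {b_1,...,b_n}. Then T_1 = {b_1,...,b_n} is the unique minimal identifying code of Γ(V): T_1 is an identifying code, and every identifying code of Γ(V) contains T_1. -/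
section Aux
variable {F W : Type*} [Field F] [Fintype F] [AddCommGroup W] [Module F W] {n : ℕ}

lemma F2_cases (hq : Fintype.card F = 2) (a : F) : a = 0 ∨ a = 1 := by
  classical
  have h : ({0, 1} : Finset F) = Finset.univ := by
    apply Finset.eq_univ_of_card
    rw [hq, Finset.card_insert_of_notMem (by simp), Finset.card_singleton]
  have ha : a ∈ ({0, 1} : Finset F) := h ▸ Finset.mem_univ a
  simpa using ha

lemma repr_eq_of_support_eq (hq : Fintype.card F = 2) (b : Module.Basis (Fin n) F W)
    {v w : W} (h : (b.repr v).support = (b.repr w).support) : v = w := by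
  have key : b.repr v = b.repr w := by
    ext i
    by_cases hi : i ∈ (b.repr v).support
    · have hi' : i ∈ (b.repr w).support := h ▸ hi
      have h1 := Finsupp.mem_support_iff.mp hi
      have h2 := Finsupp.mem_support_iff.mp hi'
      rcases F2_cases hq (b.repr v i) with h3 | h3
      · exact absurd h3 h1
      rcases F2_cases hq (b.repr w i) with h4 | h4
      · exact absurd h4 h2
      rw [h3, h4]
    · have hi' : i ∉ (b.repr w).support := h ▸ hi
      rw [Finsupp.notMem_support_iff.mp hi, Finsupp.notMem_support_iff.mp hi']
  exact b.repr.injective key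

lemma support_nonzero (b : Module.Basis (Fin n) F W) (u : {w : W // w ≠ 0}) :
    (b.repr u.1).support.Nonempty := by
  rw [Finsupp.support_nonempty_iff]
  intro h0
  exact u.2 (by simpa using b.repr.map_eq_zero_iff.mp h0)

lemma mem_closed (b : Module.Basis (Fin n) F W) (u v : {w : W // w ≠ 0}) :
    v ∈ insert u ((nzcGraph b).neighborSet u) ↔
      ∃ i, b.repr u.1 i ≠ 0 ∧ b.repr v.1 i ≠ 0 := by
  constructor
  · rintro (rfl | h)
    · obtain ⟨i, hi⟩ := support_nonzero b v
      exact ⟨i, Finsupp.mem_support_iff.mp hi, Finsupp.mem_support_iff.mp hi⟩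
    · exact h.2
  · intro h
    by_cases hv : v = u
    · exact hv ▸ Set.mem_insert _ _
    · exact Set.mem_insert_iff.mpr (Or.inr ⟨Ne.symm hv, h⟩)

lemma ei_mem_T1 (b : Module.Basis (Fin n) F W) (i : Fin n) :
    (⟨b i, b.ne_zero i⟩ : {w : W // w ≠ 0}) ∈ Tset b 1 := by
  show (b.repr (b i)).support.card = 1
  rw [b.repr_self, Finsupp.support_single_ne_zero i one_ne_zero, Finset.card_singleton]

lemma ei_mem_closed_iff (b : Module.Basis (Fin n) F W) (i : Fin n) (u : {w : W // w ≠ 0}) :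
    (⟨b i, b.ne_zero i⟩ : {w : W // w ≠ 0}) ∈ insert u ((nzcGraph b).neighborSet u) ↔
      i ∈ (b.repr u.1).support := by
  rw [mem_closed]
  constructor
  · rintro ⟨j, hj1, hj2⟩
    simp only [b.repr_self] at hj2
    have : j = i := by
      by_contra hji
      exact hj2 (Finsupp.single_eq_of_ne hji)
    exact Finsupp.mem_support_iff.mpr (this ▸ hj1)
  · intro hi
    exact ⟨i, Finsupp.mem_support_iff.mp hi, by simp [b.repr_self]⟩

end Aux

/-- For `n ≥ 3` over `F₂`, `T₁` is the unique minimal identifying code of `Γ(V)`: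
`T₁` is an identifying code and every identifying code contains `T₁`. -/
theorem stmt_17 {F W : Type*} [Field F] [Fintype F] (hq : Fintype.card F = 2)
    [AddCommGroup W] [Module F W] {n : ℕ} (hn : 3 ≤ n) (b : Module.Basis (Fin n) F W) :
    IsIdCode (nzcGraph b) (Tset b 1) ∧
      ∀ C : Set {w : W // w ≠ 0}, IsIdCode (nzcGraph b) C → Tset b 1 ⊆ C := by
  constructor
  · intro u v huv h
    apply huv
    apply Subtype.ext
    apply repr_eq_of_support_eq hq b
    ext i
    have hi := Set.ext_iff.mp h ⟨b i, b.ne_zero i⟩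
    simp only [Set.mem_inter_iff, ei_mem_T1 b i, and_true, ei_mem_closed_iff] at hi
    exact hi
  · intro C hC x hx
    obtain ⟨i, hi⟩ := Finset.card_eq_one.mp hx
    by_contra hxC
    set f : Fin n →₀ F := Finsupp.equivFunOnFinite.symm (fun _ => 1) with hf
    set g : Fin n →₀ F := Finsupp.equivFunOnFinite.symm (fun k => if k = i then 0 else 1) with hg
    have hfk : ∀ k, f k = 1 := fun k => rfl
    have hgk : ∀ k, g k = if k = i then 0 else 1 := fun k => rfl
    have hf0 : f ≠ 0 := fun h0 => one_ne_zero (α := F) (by rw [← hfk ⟨0, by omega⟩, h0]; rfl)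
    obtain ⟨j, hji⟩ := Fintype.exists_ne_of_one_lt_card (by simp; omega) i
    have hg0 : g ≠ 0 := fun h0 => by
      have := hgk j
      rw [h0] at this
      simp [hji] at this
    have hu0 : b.repr.symm f ≠ 0 := fun h0 => hf0 (by
      have := congrArg b.repr (congrArg id h0)
      simpa using this)
    have hv0 : b.repr.symm g ≠ 0 := fun h0 => hg0 (by
      have := congrArg b.repr (congrArg id h0)
      simpa using this)
    set u : {w : W // w ≠ 0} := ⟨b.repr.symm f, hu0⟩
    set v : {w : W // w ≠ 0} := ⟨b.repr.symm g, hv0⟩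
    have hru : b.repr u.1 = f := b.repr.apply_symm_apply f
    have hrv : b.repr v.1 = g := b.repr.apply_symm_apply g
    have hne : u ≠ v := by
      intro h
      have : f = g := by rw [← hru, ← hrv, h]
      have h2 := DFunLike.congr_fun this i
      rw [hfk i, hgk i] at h2
      simp at h2
    apply hC hne
    ext y
    simp only [Set.mem_inter_iff, mem_closed, hru, hrv]
    constructor
    · rintro ⟨⟨j', _, hj2⟩, hyC⟩
      refine ⟨?_, hyC⟩
      by_cases hsub : ∃ k ∈ (b.repr y.1).support, k ≠ i
      · obtain ⟨k, hk1, hk2⟩ := hsub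
        exact ⟨k, by rw [hgk k]; simp [hk2], Finsupp.mem_support_iff.mp hk1⟩
      · push_neg at hsub
        exfalso
        have hsupp : (b.repr y.1).support = {i} := by
          apply Finset.eq_singleton_iff_nonempty_unique_mem.mpr
          exact ⟨support_nonzero b y, hsub⟩
        have : y = x := Subtype.ext (repr_eq_of_support_eq hq b (by rw [hsupp, hi]))
        exact hxC (this ▸ hyC)
    · rintro ⟨⟨j', hj1, hj2⟩, hyC⟩
      exact ⟨⟨j', by rw [hfk j']; exact one_ne_zero, hj2⟩, hyC⟩
end

section
/- Let V be an n-dimensional vector space over the field F_2 of 2 elements with n > 3. Then the exchange property does not hold for locating-dominating sets in Γ(V); in particular, Γ(V) has two minimal locating-dominating sets of different cardinalities. -/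
/-- A locating-dominating set is minimal if no proper subset of it is
a locating-dominating set. -/
def IsMinLocDom {α : Type*} (G : SimpleGraph α) (L : Set α) : Prop :=
  IsLocDom G L ∧ ∀ L' : Set α, L' ⊂ L → ¬ IsLocDom G L'

/-- The exchange property for locating-dominating sets. -/
def ExchangePropertyLD {α : Type*} (G : SimpleGraph α) : Prop :=
  ∀ L₁ L₂ : Set α, IsMinLocDom G L₁ → IsMinLocDom G L₂ →
    ∀ u₁ ∈ L₁, ∃ u₂ ∈ L₂, IsMinLocDom G ((L₂ \ {u₂}) ∪ {u₁})
set_option linter.unusedSectionVars false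

namespace Stmt18Aux

open Finset

variable {F W : Type*} [Field F] [Fintype F] [AddCommGroup W] [Module F W] {n : ℕ}

lemma eq_zero_or_one (hq : Fintype.card F = 2) (x : F) : x = 0 ∨ x = 1 := by
  classical
  rcases eq_or_ne x 0 with h | h
  · exact Or.inl h
  · right
    have h2 : (Finset.univ.erase (0 : F)).card = 1 := by
      rw [Finset.card_erase_of_mem (Finset.mem_univ _), Finset.card_univ, hq]
    obtain ⟨c, hc⟩ := Finset.card_eq_one.mp h2
    have hx : x ∈ Finset.univ.erase (0 : F) :=
      Finset.mem_erase.mpr ⟨h, Finset.mem_univ _⟩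
    have h1 : (1 : F) ∈ Finset.univ.erase (0 : F) :=
      Finset.mem_erase.mpr ⟨one_ne_zero, Finset.mem_univ _⟩
    rw [hc, Finset.mem_singleton] at hx h1
    rw [hx, h1]

variable (b : Module.Basis (Fin n) F W)

noncomputable def supp (u : {w : W // w ≠ 0}) : Finset (Fin n) := (b.repr u.1).support

lemma supp_nonempty (u : {w : W // w ≠ 0}) : (supp b u).Nonempty := by
  rw [supp, Finsupp.support_nonempty_iff]
  intro h
  exact u.2 (b.repr.map_eq_zero_iff.mp h)

noncomputable def vsum (s : Finset (Fin n)) : W := ∑ i ∈ s, b i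

lemma repr_vsum (s : Finset (Fin n)) (j : Fin n) :
    b.repr (vsum b s) j = if j ∈ s then 1 else 0 := by
  classical
  rw [vsum, map_sum, Finsupp.finset_sum_apply]
  simp only [Module.Basis.repr_self, Finsupp.single_apply]
  simp [Finset.sum_ite_eq]

lemma vsum_ne_zero {s : Finset (Fin n)} (hs : s.Nonempty) : vsum b s ≠ 0 := by
  obtain ⟨j, hj⟩ := hs
  intro h
  have h2 := repr_vsum b s j
  rw [h, map_zero] at h2
  simp [hj] at h2

noncomputable def vtx (s : Finset (Fin n)) (hs : s.Nonempty) : {w : W // w ≠ 0} :=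
  ⟨vsum b s, vsum_ne_zero b hs⟩

lemma supp_vtx (s : Finset (Fin n)) (hs : s.Nonempty) : supp b (vtx b s hs) = s := by
  ext j
  simp only [supp, vtx, Finsupp.mem_support_iff, repr_vsum]
  split_ifs with h <;> simp [h]

lemma repr_eq_indicator (hq : Fintype.card F = 2) (u : {w : W // w ≠ 0}) (j : Fin n) :
    b.repr u.1 j = if j ∈ supp b u then 1 else 0 := by
  by_cases h : j ∈ supp b u
  · rcases eq_zero_or_one hq (b.repr u.1 j) with h0 | h1
    · exact absurd h0 (Finsupp.mem_support_iff.mp h)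
    · simp [h, h1]
  · simp only [h, if_neg, if_false]
    exact Finsupp.notMem_support_iff.mp h

lemma supp_injective (hq : Fintype.card F = 2) : Function.Injective (supp b) := by
  intro u v h
  apply Subtype.ext
  apply b.repr.injective
  ext j
  rw [repr_eq_indicator b hq u j, repr_eq_indicator b hq v j, h]

lemma eq_vtx_of_supp_eq (hq : Fintype.card F = 2) {u : {w : W // w ≠ 0}}
    {s : Finset (Fin n)} (hs : s.Nonempty) (h : supp b u = s) : u = vtx b s hs :=
  supp_injective b hq (h.trans (supp_vtx b s hs).symm)

lemma ne_of_supp_ne {u v : {w : W // w ≠ 0}} (h : supp b u ≠ supp b v) : u ≠ v :=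
  fun e => h (congrArg (supp b) e)

lemma adj_def (u v : {w : W // w ≠ 0}) :
    (nzcGraph b).Adj u v ↔ (u ≠ v ∧ ∃ i, b.repr u.1 i ≠ 0 ∧ b.repr v.1 i ≠ 0) :=
  Iff.rfl

lemma adj_iff (u v : {w : W // w ≠ 0}) :
    (nzcGraph b).Adj u v ↔ u ≠ v ∧ ∃ i, i ∈ supp b u ∧ i ∈ supp b v := by
  rw [adj_def]
  simp [supp, Finsupp.mem_support_iff]

lemma locDom_mono {α : Type*} {G : SimpleGraph α} {L M : Set α} (hLM : L ⊆ M)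
    (hL : IsLocDom G L) : IsLocDom G M := by
  intro u v hu hv huv
  obtain ⟨h1, h2, h3⟩ := hL (fun h => hu (hLM h)) (fun h => hv (hLM h)) huv
  refine ⟨?_, ?_, ?_⟩
  · intro h
    apply h1
    rw [Set.eq_empty_iff_forall_notMem] at h ⊢
    intro w hw
    exact h w ⟨hw.1, hLM hw.2⟩
  · intro h
    apply h2
    rw [Set.ext_iff] at h ⊢
    intro w
    constructor
    · rintro ⟨hw1, hw2⟩
      exact ⟨((h w).mp ⟨hw1, hLM hw2⟩).1, hw2⟩
    · rintro ⟨hw1, hw2⟩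
      exact ⟨((h w).mpr ⟨hw1, hLM hw2⟩).1, hw2⟩
  · intro h
    apply h3
    rw [Set.eq_empty_iff_forall_notMem] at h ⊢
    intro w hw
    exact h w ⟨hw.1, hLM hw.2⟩

lemma isMin_of_erase {α : Type*} {G : SimpleGraph α} {L : Set α}
    (hLD : IsLocDom G L) (h : ∀ x ∈ L, ¬ IsLocDom G (L \ {x})) : IsMinLocDom G L := by
  refine ⟨hLD, fun L' hL' hLD' => ?_⟩
  obtain ⟨x, hxL, hxL'⟩ := Set.exists_of_ssubset hL'
  refine h x hxL (locDom_mono (fun y hy => ⟨hL'.subset hy, ?_⟩) hLD')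
  intro hyx
  rw [Set.mem_singleton_iff] at hyx
  exact hxL' (hyx ▸ hy)

def Sset : Set {w : W // w ≠ 0} := {u | ∃ j, supp b u = {j}}

def Aset (i0 i1 : Fin n) : Set {w : W // w ≠ 0} :=
  {u | i0 ∈ supp b u ∧ supp b u ≠ Finset.univ.erase i1}

end Stmt18Aux

namespace Stmt18Aux

open Finset

variable {F W : Type*} [Field F] [Fintype F] [AddCommGroup W] [Module F W] {n : ℕ}
variable (b : Module.Basis (Fin n) F W)

lemma vtx_single_mem_N (hq : Fintype.card F = 2) {u : {w : W // w ≠ 0}}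
    (hu : u ∉ Sset b) {j : Fin n} (hj : j ∈ supp b u) :
    (vtx b {j} (Finset.singleton_nonempty j)) ∈ (nzcGraph b).neighborSet u ∩ Sset b := by
  constructor
  · rw [SimpleGraph.mem_neighborSet, adj_iff]
    refine ⟨?_, j, hj, by rw [supp_vtx]; exact Finset.mem_singleton_self j⟩
    intro h
    exact hu ⟨j, (congrArg (supp b) h).trans (supp_vtx b _ _)⟩
  · exact ⟨j, supp_vtx b _ _⟩

lemma S_isLD (hq : Fintype.card F = 2) : IsLocDom (nzcGraph b) (Sset b) := by
  intro u v hu hv huv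
  refine ⟨?_, ?_, ?_⟩
  · obtain ⟨j, hj⟩ := supp_nonempty b u
    exact (Set.nonempty_of_mem (vtx_single_mem_N b hq hu hj)).ne_empty
  · intro h
    apply huv
    apply supp_injective b hq
    rw [Set.ext_iff] at h
    ext j
    constructor
    · intro hj
      have h1 := (h _).mp (vtx_single_mem_N b hq hu hj)
      rw [Set.mem_inter_iff, SimpleGraph.mem_neighborSet, adj_iff] at h1
      obtain ⟨⟨_, i, hi1, hi2⟩, _⟩ := h1
      rw [supp_vtx, Finset.mem_singleton] at hi2
      exact hi2 ▸ hi1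
    · intro hj
      have h1 := (h _).mpr (vtx_single_mem_N b hq hv hj)
      rw [Set.mem_inter_iff, SimpleGraph.mem_neighborSet, adj_iff] at h1
      obtain ⟨⟨_, i, hi1, hi2⟩, _⟩ := h1
      rw [supp_vtx, Finset.mem_singleton] at hi2
      exact hi2 ▸ hi1
  · obtain ⟨j, hj⟩ := supp_nonempty b v
    exact (Set.nonempty_of_mem (vtx_single_mem_N b hq hv hj)).ne_empty

lemma card_univ_fin : (Finset.univ : Finset (Fin n)).card = n := by simp

lemma S_not_LD_erase (hq : Fintype.card F = 2) (hn : 3 < n) :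
    ∀ x ∈ Sset b, ¬ IsLocDom (nzcGraph b) (Sset b \ {x}) := by
  intro x hx hLD
  obtain ⟨j, hj⟩ := hx
  have hne : Nonempty (Fin n) := ⟨⟨0, by omega⟩⟩
  have hU : (Finset.univ : Finset (Fin n)).Nonempty := Finset.univ_nonempty
  have hsU : supp b (vtx b Finset.univ hU) = Finset.univ := supp_vtx b _ _
  have hvUS : vtx b Finset.univ hU ∉ Sset b := by
    rintro ⟨k, hk⟩
    rw [hsU] at hk
    have hc := congrArg Finset.card hk
    rw [card_univ_fin, Finset.card_singleton] at hc
    omega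
  have hxvU : x ≠ vtx b Finset.univ hU := by
    apply ne_of_supp_ne b
    rw [hj, hsU]
    intro h
    have hc := congrArg Finset.card h
    rw [card_univ_fin, Finset.card_singleton] at hc
    omega
  have hx' : x ∉ Sset b \ {x} := fun h => h.2 rfl
  have hvU' : vtx b Finset.univ hU ∉ Sset b \ {x} := fun h => hvUS h.1
  obtain ⟨h1, _, _⟩ := hLD hx' hvU' hxvU
  apply h1
  rw [Set.eq_empty_iff_forall_notMem]
  rintro w ⟨hw1, hw2, hw3⟩
  rw [SimpleGraph.mem_neighborSet, adj_iff] at hw1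
  obtain ⟨_, i, hi1, hi2⟩ := hw1
  obtain ⟨k, hk⟩ := hw2
  rw [hj, Finset.mem_singleton] at hi1
  rw [hk, Finset.mem_singleton] at hi2
  apply hw3
  apply supp_injective b hq
  rw [hj, hk, ← hi1, ← hi2]

section Apart

variable (i0 i1 : Fin n)

lemma R_card : (Finset.univ.erase i1).card = n - 1 := by
  rw [Finset.card_erase_of_mem (Finset.mem_univ _), card_univ_fin]

lemma small_mem_A (hn : 3 < n) {s : Finset (Fin n)} (hs : s.Nonempty)
    (hi0 : i0 ∈ s) (hcard : s.card ≤ 2) : vtx b s hs ∈ Aset b i0 i1 := by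
  constructor
  · rw [supp_vtx]; exact hi0
  · rw [supp_vtx]
    intro h
    have hc := congrArg Finset.card h
    rw [R_card] at hc
    omega

lemma pair_mem_N (hn : 3 < n) {u : {w : W // w ≠ 0}} {k : Fin n}
    (hk : k ∈ supp b u) (hi0 : i0 ∉ supp b u) :
    vtx b (insert i0 {k}) (Finset.insert_nonempty _ _) ∈
      (nzcGraph b).neighborSet u ∩ Aset b i0 i1 := by
  constructor
  · rw [SimpleGraph.mem_neighborSet, adj_iff]
    refine ⟨?_, k, hk, by rw [supp_vtx]; exact Finset.mem_insert_of_mem (Finset.mem_singleton_self k)⟩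
    apply ne_of_supp_ne b
    intro h
    rw [supp_vtx] at h
    exact hi0 (h ▸ Finset.mem_insert_self i0 {k})
  · refine small_mem_A b i0 i1 hn _ (Finset.mem_insert_self i0 {k}) ?_
    calc (insert i0 ({k} : Finset (Fin n))).card ≤ ({k} : Finset (Fin n)).card + 1 := Finset.card_insert_le _ _
    _ = 2 := by rw [Finset.card_singleton]

lemma pair_transfer {k : Fin n} {v : {w : W // w ≠ 0}}
    (hvi0 : i0 ∉ supp b v)
    (hmem : (nzcGraph b).Adj v (vtx b (insert i0 {k}) (Finset.insert_nonempty _ _))) :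
    k ∈ supp b v := by
  rw [adj_iff] at hmem
  obtain ⟨_, i, hi1, hi2⟩ := hmem
  rw [supp_vtx, Finset.mem_insert, Finset.mem_singleton] at hi2
  rcases hi2 with rfl | rfl
  · exact absurd hi1 hvi0
  · exact hi1

lemma not_mem_A_cases {u : {w : W // w ≠ 0}} (hu : u ∉ Aset b i0 i1) :
    supp b u = Finset.univ.erase i1 ∨ i0 ∉ supp b u := by
  by_cases h : supp b u = Finset.univ.erase i1
  · exact Or.inl h
  · right
    intro h0
    exact hu ⟨h0, h⟩

lemma sing_mem_NA (hn : 3 < n) (h01 : i0 ≠ i1) {u : {w : W // w ≠ 0}}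
    (hu : supp b u = Finset.univ.erase i1) :
    vtx b {i0} (Finset.singleton_nonempty i0) ∈
      (nzcGraph b).neighborSet u ∩ Aset b i0 i1 := by
  constructor
  · rw [SimpleGraph.mem_neighborSet, adj_iff]
    refine ⟨?_, i0, ?_, by rw [supp_vtx]; exact Finset.mem_singleton_self i0⟩
    · apply ne_of_supp_ne b
      rw [hu, supp_vtx]
      intro h
      have hc := congrArg Finset.card h
      rw [R_card, Finset.card_singleton] at hc
      omega
    · rw [hu]; exact Finset.mem_erase.mpr ⟨h01, Finset.mem_univ _⟩
  · exact small_mem_A b i0 i1 hn _ (Finset.mem_singleton_self i0) (by rw [Finset.card_singleton]; omega)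

lemma A_isLD (hq : Fintype.card F = 2) (hn : 3 < n) (h01 : i0 ≠ i1) :
    IsLocDom (nzcGraph b) (Aset b i0 i1) := by
  have dom : ∀ u, u ∉ Aset b i0 i1 →
      ∃ a, a ∈ (nzcGraph b).neighborSet u ∩ Aset b i0 i1 := by
    intro u hu
    rcases not_mem_A_cases b i0 i1 hu with hR | hi0u
    · exact ⟨_, sing_mem_NA b i0 i1 hn h01 hR⟩
    · obtain ⟨k, hk⟩ := supp_nonempty b u
      by_cases hins : insert i0 (supp b u) = Finset.univ.erase i1
      · exact ⟨_, pair_mem_N b i0 i1 hn hk hi0u⟩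
      · refine ⟨vtx b (insert i0 (supp b u)) (Finset.insert_nonempty _ _), ?_, ?_, ?_⟩
        · rw [SimpleGraph.mem_neighborSet, adj_iff]
          refine ⟨?_, k, hk, by rw [supp_vtx]; exact Finset.mem_insert_of_mem hk⟩
          apply ne_of_supp_ne b
          intro h
          rw [supp_vtx] at h
          exact hi0u (h ▸ Finset.mem_insert_self i0 _)
        · rw [supp_vtx]; exact Finset.mem_insert_self i0 _
        · rw [supp_vtx]; exact hins
  have distinct : ∀ u v, u ∉ Aset b i0 i1 → v ∉ Aset b i0 i1 →
      (nzcGraph b).neighborSet u ∩ Aset b i0 i1 =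
        (nzcGraph b).neighborSet v ∩ Aset b i0 i1 → u = v := by
    have tr : ∀ u v, supp b u = Finset.univ.erase i1 → i0 ∉ supp b v →
        (nzcGraph b).neighborSet u ∩ Aset b i0 i1 =
          (nzcGraph b).neighborSet v ∩ Aset b i0 i1 → False := by
      intro u v hu hv h
      rw [Set.ext_iff] at h
      have h1 := (h _).mp (sing_mem_NA b i0 i1 hn h01 hu)
      rw [Set.mem_inter_iff, SimpleGraph.mem_neighborSet, adj_iff] at h1
      obtain ⟨⟨_, i, hi1, hi2⟩, _⟩ := h1
      rw [supp_vtx, Finset.mem_singleton] at hi2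
      exact hv (hi2 ▸ hi1)
    intro u v hu hv h
    rcases not_mem_A_cases b i0 i1 hu with hru | hru <;>
      rcases not_mem_A_cases b i0 i1 hv with hrv | hrv
    · exact supp_injective b hq (hru.trans hrv.symm)
    · exact absurd h (by intro hh; exact tr u v hru hrv hh)
    · exact absurd h.symm (by intro hh; exact tr v u hrv hru hh)
    · apply supp_injective b hq
      rw [Set.ext_iff] at h
      ext k
      constructor
      · intro hk
        have h1 := (h _).mp (pair_mem_N b i0 i1 hn hk hru)
        exact pair_transfer b i0 hrv h1.1
      · intro hk
        have h1 := (h _).mpr (pair_mem_N b i0 i1 hn hk hrv)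
        exact pair_transfer b i0 hru h1.1
  intro u v hu hv huv
  refine ⟨?_, fun h => huv (distinct u v hu hv h), ?_⟩
  · obtain ⟨a, ha⟩ := dom u hu
    exact (Set.nonempty_of_mem ha).ne_empty
  · obtain ⟨a, ha⟩ := dom v hv
    exact (Set.nonempty_of_mem ha).ne_empty

lemma A_not_LD_erase (hn : 3 < n) (h01 : i0 ≠ i1) :
    ∀ x ∈ Aset b i0 i1, ¬ IsLocDom (nzcGraph b) (Aset b i0 i1 \ {x}) := by
  intro x hx hLD
  have hRne : (Finset.univ.erase i1).Nonempty :=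
    Finset.card_pos.mp (by rw [R_card]; omega)
  have hsvR : supp b (vtx b _ hRne) = Finset.univ.erase i1 := supp_vtx b _ _
  have hvRA : vtx b _ hRne ∉ Aset b i0 i1 := fun h => h.2 hsvR
  have hxvR : x ≠ vtx b _ hRne := ne_of_supp_ne b (by rw [hsvR]; exact hx.2)
  have hx' : x ∉ Aset b i0 i1 \ {x} := fun h => h.2 rfl
  have hvR' : vtx b _ hRne ∉ Aset b i0 i1 \ {x} := fun h => hvRA h.1
  obtain ⟨_, h2, _⟩ := hLD hx' hvR' hxvR
  apply h2
  ext w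
  simp only [Set.mem_inter_iff, SimpleGraph.mem_neighborSet, Set.mem_diff,
    Set.mem_singleton_iff]
  constructor
  · rintro ⟨hadj, hwA, hwx⟩
    refine ⟨?_, hwA, hwx⟩
    rw [adj_iff]
    refine ⟨?_, i0, ?_, hwA.1⟩
    · apply ne_of_supp_ne b
      intro h
      exact hwA.2 (h.symm.trans hsvR)
    · rw [hsvR]; exact Finset.mem_erase.mpr ⟨h01, Finset.mem_univ _⟩
  · rintro ⟨hadj, hwA, hwx⟩
    refine ⟨?_, hwA, hwx⟩
    rw [adj_iff]
    exact ⟨Ne.symm hwx, i0, hx.1, hwA.1⟩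

end Apart

end Stmt18Aux

namespace Stmt18Aux

open Finset

variable {F W : Type*} [Field F] [Fintype F] [AddCommGroup W] [Module F W] {n : ℕ}
variable (b : Module.Basis (Fin n) F W)

lemma ne_of_card_supp_ne {u v : {w : W // w ≠ 0}}
    (h : (supp b u).card ≠ (supp b v).card) : u ≠ v :=
  ne_of_supp_ne b (fun e => h (congrArg Finset.card e))

end Stmt18Aux

open Stmt18Aux Finset

/-- For `n > 3` over `F₂`, the exchange property fails for locating-dominating sets
in `Γ(V)`; in particular there are two minimal locating-dominating sets of
different cardinalities. -/
theorem stmt_18 {F W : Type*} [Field F] [Fintype F] (hq : Fintype.card F = 2)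
    [AddCommGroup W] [Module F W] {n : ℕ} (hn : 3 < n) (b : Module.Basis (Fin n) F W) :
    ¬ ExchangePropertyLD (nzcGraph b) ∧
      ∃ L₁ L₂ : Set {w : W // w ≠ 0}, IsMinLocDom (nzcGraph b) L₁ ∧
        IsMinLocDom (nzcGraph b) L₂ ∧ L₁.ncard ≠ L₂.ncard := by
  classical
  have hn0 : (0 : ℕ) < n := by omega
  haveI : Nonempty (Fin n) := ⟨⟨0, hn0⟩⟩
  set i0 : Fin n := ⟨0, by omega⟩ with hi0def
  set i1 : Fin n := ⟨1, by omega⟩ with hi1def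
  have h01 : i0 ≠ i1 := by
    intro h
    rw [hi0def, hi1def, Fin.mk.injEq] at h
    omega
  haveI : Finite W := Finite.of_injective (fun w (j : Fin n) => b.repr w j)
    (fun x y h => b.repr.injective (Finsupp.ext fun j => congrFun h j))
  have hA : IsMinLocDom (nzcGraph b) (Aset b i0 i1) :=
    isMin_of_erase (A_isLD b i0 i1 hq hn h01) (A_not_LD_erase b i0 i1 hn h01)
  have hS : IsMinLocDom (nzcGraph b) (Sset b) :=
    isMin_of_erase (S_isLD b hq) (S_not_LD_erase b hq hn)
  have hU : (Finset.univ : Finset (Fin n)).Nonempty := Finset.univ_nonempty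
  -- cardinality of Sset
  have hSeq : Sset b =
      ↑(Finset.univ.image (fun j : Fin n => vtx b {j} (Finset.singleton_nonempty j))) := by
    ext u
    simp only [Finset.coe_image, Finset.coe_univ, Set.image_univ, Set.mem_range]
    constructor
    · rintro ⟨j, hj⟩
      exact ⟨j, (eq_vtx_of_supp_eq b hq (Finset.singleton_nonempty j) hj).symm⟩
    · rintro ⟨j, rfl⟩
      exact ⟨j, supp_vtx b _ _⟩
  have hS_card : (Sset b).ncard = n := by
    rw [hSeq, Set.ncard_coe_finset,
      Finset.card_image_of_injective _ (fun j j' h => by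
        have h2 := congrArg (supp b) h
        rw [supp_vtx, supp_vtx] at h2
        exact Finset.singleton_injective h2), card_univ_fin]
  -- cardinality of Aset : at least n + 1
  have hUA : vtx b Finset.univ hU ∈ Aset b i0 i1 := by
    constructor
    · rw [supp_vtx]; exact Finset.mem_univ _
    · rw [supp_vtx]
      intro h
      have h2 : i1 ∈ Finset.univ.erase i1 := h ▸ Finset.mem_univ i1
      exact (Finset.mem_erase.mp h2).1 rfl
  have hA_card : n + 1 ≤ (Aset b i0 i1).ncard := by
    set f : Fin n → {w : W // w ≠ 0} :=
      fun j => vtx b (insert i0 {j}) (Finset.insert_nonempty _ _) with hfdef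
    set T : Finset {w : W // w ≠ 0} :=
      insert (vtx b {i0} (Finset.singleton_nonempty i0))
        (insert (vtx b Finset.univ hU) ((Finset.univ.erase i0).image f)) with hTdef
    have hcard_ins : ∀ j : Fin n, (insert i0 ({j} : Finset (Fin n))).card ≤ 2 := by
      intro j
      calc (insert i0 ({j} : Finset (Fin n))).card ≤ ({j} : Finset (Fin n)).card + 1 :=
          Finset.card_insert_le _ _
        _ = 2 := by rw [Finset.card_singleton]
    have hTA : ↑T ⊆ Aset b i0 i1 := by
      intro u hu
      rw [Finset.coe_insert, Set.mem_insert_iff, Finset.coe_insert, Set.mem_insert_iff] at hu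
      rcases hu with rfl | rfl | hu
      · exact small_mem_A b i0 i1 hn _ (Finset.mem_singleton_self i0)
          (by rw [Finset.card_singleton]; omega)
      · exact hUA
      · rw [Finset.mem_coe, Finset.mem_image] at hu
        obtain ⟨j, _, rfl⟩ := hu
        exact small_mem_A b i0 i1 hn _ (Finset.mem_insert_self i0 {j}) (hcard_ins j)
    have himg : ((Finset.univ.erase i0).image f).card = n - 1 := by
      rw [Finset.card_image_of_injOn, Finset.card_erase_of_mem (Finset.mem_univ _),
        card_univ_fin]
      intro j hjmem j' hj'mem h
      have h2 := congrArg (supp b) h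
      rw [hfdef] at h2
      simp only [supp_vtx] at h2
      have h3 : j ∈ insert i0 ({j'} : Finset (Fin n)) :=
        h2 ▸ Finset.mem_insert_of_mem (Finset.mem_singleton_self j)
      rcases Finset.mem_insert.mp h3 with h4 | h4
      · exact absurd h4 (Finset.mem_erase.mp hjmem).1
      · exact Finset.mem_singleton.mp h4
    have hvU_img : vtx b Finset.univ hU ∉ (Finset.univ.erase i0).image f := by
      intro h
      obtain ⟨j, _, hfj⟩ := Finset.mem_image.mp h
      have h2 := congrArg (supp b) hfj
      rw [hfdef] at h2
      simp only [supp_vtx] at h2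
      have h3 := congrArg Finset.card h2
      rw [card_univ_fin] at h3
      have := hcard_ins j
      omega
    have hs0 : vtx b {i0} (Finset.singleton_nonempty i0) ∉
        insert (vtx b Finset.univ hU) ((Finset.univ.erase i0).image f) := by
      intro h
      rcases Finset.mem_insert.mp h with h | h
      · have h2 := congrArg (supp b) h
        rw [supp_vtx, supp_vtx] at h2
        have h3 := congrArg Finset.card h2
        rw [Finset.card_singleton, card_univ_fin] at h3
        omega
      · obtain ⟨j, hjmem, hfj⟩ := Finset.mem_image.mp h
        have h2 := congrArg (supp b) hfj
        rw [hfdef] at h2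
        simp only [supp_vtx] at h2
        have h3 : j ∈ ({i0} : Finset (Fin n)) :=
          h2 ▸ Finset.mem_insert_of_mem (Finset.mem_singleton_self j)
        exact (Finset.mem_erase.mp hjmem).1 (Finset.mem_singleton.mp h3)
    have hTcard : T.card = n + 1 := by
      rw [hTdef, Finset.card_insert_of_notMem hs0,
        Finset.card_insert_of_notMem hvU_img, himg]
      omega
    calc n + 1 = T.card := hTcard.symm
      _ = (↑T : Set {w : W // w ≠ 0}).ncard := (Set.ncard_coe_finset T).symm
      _ ≤ (Aset b i0 i1).ncard := Set.ncard_le_ncard hTA (Set.toFinite _)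
  refine ⟨?_, Aset b i0 i1, Sset b, hA, hS, by omega⟩
  -- refutation of the exchange property
  intro hEx
  obtain ⟨u₂, hu₂, hmin⟩ := hEx (Aset b i0 i1) (Sset b) hA hS (vtx b Finset.univ hU) hUA
  obtain ⟨j, hj⟩ := hu₂
  have hcard_ej : 1 < (Finset.univ.erase j).card := by
    rw [Finset.card_erase_of_mem (Finset.mem_univ _), card_univ_fin]; omega
  obtain ⟨a, ha, c, hc, hac⟩ := Finset.one_lt_card.mp hcard_ej
  have haj : a ≠ j := (Finset.mem_erase.mp ha).1
  have hcj : c ≠ j := (Finset.mem_erase.mp hc).1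
  set s2 : Finset (Fin n) := insert a {c} with hs2def
  set s3 : Finset (Fin n) := insert j s2 with hs3def
  have hs2ne : s2.Nonempty := Finset.insert_nonempty _ _
  have hs3ne : s3.Nonempty := Finset.insert_nonempty _ _
  have hs2c : s2.card = 2 := by
    rw [hs2def, Finset.card_insert_of_notMem (by simp [hac]), Finset.card_singleton]
  have hjs2 : j ∉ s2 := by
    rw [hs2def]
    simp only [Finset.mem_insert, Finset.mem_singleton]
    push_neg
    exact ⟨Ne.symm haj, Ne.symm hcj⟩
  have hs3c : s3.card = 3 := by
    rw [hs3def, Finset.card_insert_of_notMem hjs2, hs2c]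
  set u : {w : W // w ≠ 0} := vtx b s2 hs2ne with hudef
  set v : {w : W // w ≠ 0} := vtx b s3 hs3ne with hvdef
  set M : Set {w : W // w ≠ 0} := (Sset b \ {u₂}) ∪ {vtx b Finset.univ hU} with hMdef
  have hsu : supp b u = s2 := supp_vtx b _ _
  have hsv : supp b v = s3 := supp_vtx b _ _
  have hnotS : ∀ x : {w : W // w ≠ 0}, (supp b x).card ≠ 1 → x ∉ Sset b := by
    intro x hx ⟨k, hk⟩
    exact hx (by rw [hk, Finset.card_singleton])
  have huM : u ∉ M := by
    rw [hMdef]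
    rintro (⟨hmem, -⟩ | hmem)
    · exact hnotS u (by rw [hsu, hs2c]; omega) hmem
    · rw [Set.mem_singleton_iff] at hmem
      have h2 := congrArg (supp b) hmem
      rw [hsu, supp_vtx] at h2
      have h3 := congrArg Finset.card h2
      rw [hs2c, card_univ_fin] at h3
      omega
  have hvM : v ∉ M := by
    rw [hMdef]
    rintro (⟨hmem, -⟩ | hmem)
    · exact hnotS v (by rw [hsv, hs3c]; omega) hmem
    · rw [Set.mem_singleton_iff] at hmem
      have h2 := congrArg (supp b) hmem
      rw [hsv, supp_vtx] at h2
      have h3 := congrArg Finset.card h2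
      rw [hs3c, card_univ_fin] at h3
      omega
  have huv : u ≠ v := ne_of_card_supp_ne b (by rw [hsu, hsv, hs2c, hs3c]; omega)
  have key : ∀ w ∈ M, ((nzcGraph b).Adj u w ↔ (nzcGraph b).Adj v w) := by
    intro w hw
    rw [hMdef] at hw
    rcases hw with ⟨⟨k, hk⟩, hwu₂⟩ | hw
    · have hkj : k ≠ j := by
        rintro rfl
        apply hwu₂
        rw [Set.mem_singleton_iff]
        exact supp_injective b hq (hk.trans hj.symm)
      have hk1 : (supp b w).card = 1 := by rw [hk, Finset.card_singleton]
      constructor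
      · intro hadj
        rw [adj_iff] at hadj ⊢
        obtain ⟨-, i, hi1, hi2⟩ := hadj
        refine ⟨ne_of_card_supp_ne b (by rw [hsv, hs3c, hk1]; omega), i, ?_, hi2⟩
        rw [hsu] at hi1
        rw [hsv, hs3def]
        exact Finset.mem_insert_of_mem hi1
      · intro hadj
        rw [adj_iff] at hadj ⊢
        obtain ⟨-, i, hi1, hi2⟩ := hadj
        refine ⟨ne_of_card_supp_ne b (by rw [hsu, hs2c, hk1]; omega), i, ?_, hi2⟩
        rw [hsv, hs3def] at hi1
        rw [hsu]
        rcases Finset.mem_insert.mp hi1 with rfl | h4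
        · rw [hk, Finset.mem_singleton] at hi2
          exact absurd hi2.symm hkj
        · exact h4
    · rw [Set.mem_singleton_iff] at hw
      subst hw
      have hsw : supp b (vtx b Finset.univ hU) = Finset.univ := supp_vtx b _ _
      constructor
      · intro _
        rw [adj_iff]
        refine ⟨ne_of_card_supp_ne b (by rw [hsv, hs3c, hsw, card_univ_fin]; omega),
          a, ?_, by rw [hsw]; exact Finset.mem_univ _⟩
        rw [hsv, hs3def, hs2def]
        exact Finset.mem_insert_of_mem (Finset.mem_insert_self a {c})
      · intro _
        rw [adj_iff]
        refine ⟨ne_of_card_supp_ne b (by rw [hsu, hs2c, hsw, card_univ_fin]; omega),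
          a, ?_, by rw [hsw]; exact Finset.mem_univ _⟩
        rw [hsu, hs2def]
        exact Finset.mem_insert_self a {c}
  obtain ⟨-, h2, -⟩ := hmin.1 huM hvM huv
  apply h2
  ext w
  simp only [Set.mem_inter_iff, SimpleGraph.mem_neighborSet]
  constructor
  · rintro ⟨hadj, hwM⟩
    exact ⟨(key w hwM).mp hadj, hwM⟩
  · rintro ⟨hadj, hwM⟩
    exact ⟨(key w hwM).mpr hadj, hwM⟩
end
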